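/- Let f_1, f_2 be a two-player troop placement on a disjoint union of edges in which for every edge either both endpoints are unoccupied, or both are occupied by different players. Suppose on exactly k edges the second player's endpoint has strictly more troops than the first player's endpoint ('captured' edges), and on all other occupied edges the troop counts on the two endpoints are equal. Then: (a) exactly the first player's endpoints of the k captured edges are vulnerable, and no second-player vertex is vulnerable; (b) if additionally the first player occupies k further edges with both endpoints to herself (one troop each suffices), then after all attacks resolve both players own equally many territories. -/

import Mathlib

/-- The matching graph on edges indexed by `ι`. -/
def matchingGraph (ι : Type*) : SimpleGraph (ι × Bool) where
  Adj a b := a.1 = b.1 ∧ a.2 ≠ b.2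
  symm := ⟨fun _ _ h => ⟨h.1.symm, h.2.symm⟩⟩
  loopless := ⟨fun _ h => h.2 rfl⟩

/- `oppSum G g v` is the total number of opposing troops (given by `g`) on the
neighbors of `v` in `G`. -/
open Classical in
noncomputable def oppSum {V : Type*} [Fintype V] (G : SimpleGraph V) (g : V → ℕ)
    (v : V) : ℕ :=
  ∑ u ∈ Finset.univ.filter (fun u => G.Adj v u), g u

/-!
On a matching the only opponent a vertex `v` faces is the one on the other endpoint `(v.1, !v.2)`
of its edge, so vulnerability is a comparison along single edges. A first-player vertex is
outnumbered exactly on the `k` captured edges, and a second-player vertex never is (it has at least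
as many troops as its opponent). Hence the first player loses `k` territories; she holds one for
every occupied mirrored edge plus `k` on her own edges, while the second player holds one for every
occupied mirrored edge, so the counts agree after the attacks.
-/

open Classical in
theorem oppSum_matchingGraph {V : Type*} [Fintype V] (g : V × Bool → ℕ) (v : V × Bool) :
    oppSum (matchingGraph V) g v = g (v.1, !v.2) := by
  have : Finset.univ.filter (fun u => (matchingGraph V).Adj v u) = {(v.1, !v.2)} := by
    ext ⟨x, b⟩
    obtain ⟨y, c⟩ := v
    cases b <;> cases c <;> simp [matchingGraph, Prod.ext_iff, eq_comm (a := x)]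
  rw [oppSum, this, Finset.sum_singleton]

structure CaptureLayout {ι κ : Type*} (f1 f2 : (ι ⊕ κ) × Bool → ℕ) (C : Finset ι) : Prop where
  orient : ∀ i : ι, f2 (Sum.inl i, false) = 0 ∧ f1 (Sum.inl i, true) = 0
  capture : ∀ i ∈ C, 0 < f1 (Sum.inl i, false) ∧ f1 (Sum.inl i, false) < f2 (Sum.inl i, true)
  balanced : ∀ i ∉ C, f1 (Sum.inl i, false) = f2 (Sum.inl i, true)
  own : ∀ j : κ, f1 (Sum.inr j, false) = 1 ∧ f1 (Sum.inr j, true) = 0 ∧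
    f2 (Sum.inr j, false) = 0 ∧ f2 (Sum.inr j, true) = 0

namespace CaptureLayout

variable {ι κ : Type*} {f1 f2 : (ι ⊕ κ) × Bool → ℕ} {C : Finset ι}

theorem second_pos_iff_first_pos (h : CaptureLayout f1 f2 C) (i : ι) :
    0 < f2 (Sum.inl i, true) ↔ 0 < f1 (Sum.inl i, false) := by
  by_cases hi : i ∈ C
  · exact ⟨fun _ => (h.capture i hi).1, fun hpos => hpos.trans (h.capture i hi).2⟩
  · rw [h.balanced i hi]

theorem first_vulnerable_iff (h : CaptureLayout f1 f2 C) (v : (ι ⊕ κ) × Bool) :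
    0 < f1 v ∧ f1 v < f2 (v.1, !v.2) ↔ ∃ i ∈ C, v = (Sum.inl i, false) := by
  obtain ⟨i | j, _ | _⟩ := v
  · by_cases hi : i ∈ C
    · simp [hi, h.capture i hi]
    · simp [hi, h.balanced i hi]
  · simp [h.orient i]
  · simp [h.own j]
  · simp [h.own j]

theorem not_second_vulnerable (h : CaptureLayout f1 f2 C) (v : (ι ⊕ κ) × Bool) :
    ¬ (0 < f2 v ∧ f2 v < f1 (v.1, !v.2)) := by
  obtain ⟨i | j, _ | _⟩ := v
  · simp [h.orient i]
  · by_cases hi : i ∈ C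
    · simpa using fun _ => (h.capture i hi).2.le
    · simp [h.balanced i hi]
  · simp [h.own j]
  · simp [h.own j]

variable [Fintype ι] [Fintype κ]

theorem card_first_occupied (h : CaptureLayout f1 f2 C) :
    (Finset.univ.filter fun v => 0 < f1 v).card =
      (Finset.univ.filter fun i => 0 < f1 (Sum.inl i, false)).card + Fintype.card κ := by
  simp only [Finset.card_filter, Fintype.sum_prod_type, Fintype.sum_sum_type, Fintype.sum_bool]
  simp [h.orient, h.own]

theorem card_second_occupied (h : CaptureLayout f1 f2 C) :
    (Finset.univ.filter fun v => 0 < f2 v).card =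
      (Finset.univ.filter fun i => 0 < f1 (Sum.inl i, false)).card := by
  simp only [Finset.card_filter, Fintype.sum_prod_type, Fintype.sum_sum_type, Fintype.sum_bool]
  simp [h.orient, h.own, h.second_pos_iff_first_pos]

theorem card_first_vulnerable (h : CaptureLayout f1 f2 C) :
    (Finset.univ.filter fun v => 0 < f1 v ∧ f1 v < f2 (v.1, !v.2)).card = C.card := by
  have : (Finset.univ.filter fun v => 0 < f1 v ∧ f1 v < f2 (v.1, !v.2)) =
      C.map ⟨fun i => (Sum.inl i, false), fun i i' hii' => by simpa using hii'⟩ := by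
    ext v
    simp only [Finset.mem_filter, Finset.mem_univ, true_and, Finset.mem_map,
      h.first_vulnerable_iff v, eq_comm (a := v)]
    rfl
  rw [this, Finset.card_map]

end CaptureLayout

open Classical in
theorem stmt7 {ι κ : Type*} [Fintype ι] [Fintype κ] (k : ℕ)
    (f1 f2 : (ι ⊕ κ) × Bool → ℕ)
    (C : Finset ι) (hC : C.card = k) (hκ : Fintype.card κ = k)
    (horient : ∀ i : ι, f2 (Sum.inl i, false) = 0 ∧ f1 (Sum.inl i, true) = 0)
    (hcap : ∀ i ∈ C, 0 < f1 (Sum.inl i, false) ∧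
      f1 (Sum.inl i, false) < f2 (Sum.inl i, true))
    (heq : ∀ i ∉ C, f1 (Sum.inl i, false) = f2 (Sum.inl i, true))
    (hown : ∀ j : κ, f1 (Sum.inr j, false) = 1 ∧ f1 (Sum.inr j, true) = 0 ∧
      f2 (Sum.inr j, false) = 0 ∧ f2 (Sum.inr j, true) = 0) :
    (∀ v, (0 < f1 v ∧ f1 v < oppSum (matchingGraph (ι ⊕ κ)) f2 v) ↔
        ∃ i ∈ C, v = (Sum.inl i, false)) ∧
    (∀ v, ¬ (0 < f2 v ∧ f2 v < oppSum (matchingGraph (ι ⊕ κ)) f1 v)) ∧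
    (Finset.univ.filter fun v => 0 < f1 v).card
        - (Finset.univ.filter fun v =>
            0 < f1 v ∧ f1 v < oppSum (matchingGraph (ι ⊕ κ)) f2 v).card
      = (Finset.univ.filter fun v => 0 < f2 v).card := by
  have h : CaptureLayout f1 f2 C := ⟨horient, hcap, heq, hown⟩
  simp only [oppSum_matchingGraph]
  refine ⟨h.first_vulnerable_iff, h.not_second_vulnerable, ?_⟩
  rw [h.card_first_occupied, h.card_first_vulnerable, h.card_second_occupied, hC, hκ,
    Nat.add_sub_cancel]
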